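/- Let 0 < α ≤ 1, let F be a finite field, and let b distinct pairs (x_i, y_i) ∈ F × F be given. If α > sqrt(2d/b), then the number of polynomials g of degree at most d over F that satisfy g(x_i) = y_i for at least α·b of the pairs is at most 2/α. -/

import Mathlib

/-!
Two distinct polynomials of degree at most `d` agree on at most `d` of the (distinct) points, so
the agreement sets of `k` such polynomials pairwise meet in at most `d` points. The second
Bonferroni inequality then bounds the size of their union from below by
`k · αb - (k choose 2) · d`, which exceeds `b` for `k = ⌈2/α⌉` as soon as `α²b > 2d`.
-/

open Polynomial Finset

theorem Finset.sum_card_le_card_biUnion_add_choose_two_mul {ι α : Type*} [DecidableEq α]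
    (T : Finset ι) (A : ι → Finset α) {d : ℕ}
    (hA : ∀ g ∈ T, ∀ h ∈ T, g ≠ h → #(A g ∩ A h) ≤ d) :
    ∑ g ∈ T, #(A g) ≤ #(T.biUnion A) + (#T).choose 2 * d := by
  classical
  induction T using Finset.induction_on with
  | empty => simp
  | insert g T hg ih =>
    have ih := ih fun g₁ h₁ h₂ h₂T => hA g₁ (mem_insert_of_mem h₁) h₂ (mem_insert_of_mem h₂T)
    have hcap : #(A g ∩ T.biUnion A) ≤ #T * d :=
      calc #(A g ∩ T.biUnion A) = #(T.biUnion fun h => A g ∩ A h) := by rw [inter_biUnion]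
        _ ≤ ∑ h ∈ T, #(A g ∩ A h) := card_biUnion_le
        _ ≤ ∑ _h ∈ T, d := sum_le_sum fun h hh =>
          hA g (mem_insert_self g T) h (mem_insert_of_mem hh) (ne_of_mem_of_not_mem hh hg).symm
        _ = #T * d := by rw [sum_const, smul_eq_mul]
    have hunion := card_union_add_card_inter (A g) (T.biUnion A)
    rw [sum_insert hg, biUnion_insert, card_insert_of_notMem hg, Nat.choose_succ_succ',
      Nat.choose_one_right]
    linarith

theorem Set.finite_and_ncard_lt_of_forall_finset_card_ne {α : Type*} {S : Set α} {k : ℕ}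
    (h : ∀ T : Finset α, ↑T ⊆ S → #T ≠ k) : S.Finite ∧ S.ncard < k := by
  have hfin : S.Finite := Set.not_infinite.1 fun hinf =>
    let ⟨T, hTS, hT⟩ := hinf.exists_subset_card_eq k
    h T hTS hT
  refine ⟨hfin, lt_of_not_ge fun hk => ?_⟩
  obtain ⟨t, hts, htk⟩ := Set.exists_subset_card_eq hk
  have htfin := hfin.subset hts
  exact h htfin.toFinset (by simpa using hts) (by rw [← Set.ncard_eq_toFinset_card t htfin, htk])

section Agreement

variable {ι F : Type*} [Fintype ι] [DecidableEq F]

def agreementSet [Semiring F] (pts : ι → F × F) (g : F[X]) : Finset ι :=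
  univ.filter fun i => g.eval (pts i).1 = (pts i).2

theorem card_agreementSet_inter_le [DecidableEq ι] [CommRing F] [IsDomain F] {pts : ι → F × F}
    (hpts : Function.Injective pts) {g h : F[X]} {d : ℕ} (hgh : g ≠ h)
    (hg : g.natDegree ≤ d) (hh : h.natDegree ≤ d) :
    #(agreementSet pts g ∩ agreementSet pts h) ≤ d := by
  by_contra! hlt
  set s : Finset ι := agreementSet pts g ∩ agreementSet pts h
  have heval : ∀ i ∈ s, g.eval (pts i).1 = (pts i).2 ∧ h.eval (pts i).1 = (pts i).2 := by
    intro i hi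
    simpa [s, agreementSet] using hi
  have hinj : Set.InjOn (fun i => (pts i).1) s := fun i hi j hj hij =>
    hpts <| Prod.ext hij <| by
      rw [← (heval i hi).1, ← (heval j hj).1, show (pts i).1 = (pts j).1 from hij]
  have hdeg {p : F[X]} (hp : p.natDegree ≤ d) : p.degree < #s :=
    degree_le_natDegree.trans_lt (by exact_mod_cast hp.trans_lt hlt)
  exact hgh <| eq_of_degrees_lt_of_eval_index_eq s hinj (hdeg hg) (hdeg hh) fun i hi =>
    (heval i hi).1.trans (heval i hi).2.symm

theorem card_ne_ceil_of_forall_agreement [DecidableEq ι] [Field F] {pts : ι → F × F}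
    (hpts : Function.Injective pts) {d : ℕ} {α : ℝ} (hα : 0 < α)
    (hd : 2 * d < α ^ 2 * Fintype.card ι) (T : Finset F[X])
    (hT : ∀ g ∈ T, g.natDegree ≤ d ∧ α * Fintype.card ι ≤ #(agreementSet pts g)) :
    #T ≠ ⌈2 / α⌉₊ := by
  intro hk
  set b : ℝ := (Fintype.card ι : ℝ)
  set k : ℝ := (#T : ℝ) with hkdef
  have hbonf := sum_card_le_card_biUnion_add_choose_two_mul T (agreementSet pts)
    fun g hg h hh hgh => card_agreementSet_inter_le hpts hgh (hT g hg).1 (hT h hh).1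
  have hunion : (#(T.biUnion (agreementSet pts)) : ℝ) ≤ b :=
    Nat.cast_le.2 (card_le_univ _)
  have hsum : k * (α * b) ≤ ∑ g ∈ T, (#(agreementSet pts g) : ℝ) := by
    simpa [hkdef] using sum_le_sum fun g hg => (hT g hg).2
  have hbonfR : ∑ g ∈ T, (#(agreementSet pts g) : ℝ)
      ≤ #(T.biUnion (agreementSet pts)) + k * (k - 1) / 2 * d := by
    rw [← Nat.cast_choose_two]; exact_mod_cast hbonf
  have hk₁ : 2 ≤ k * α := by
    rw [← div_le_iff₀ hα, hkdef, hk]; exact Nat.le_ceil _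
  have hk₂ : (k - 1) * α < 2 := by
    rw [← lt_div_iff₀ hα, sub_lt_iff_lt_add, hkdef, hk]; exact Nat.ceil_lt_add_one (by positivity)
  have hd₀ : (0 : ℝ) ≤ d := d.cast_nonneg
  -- `(k - 1) α < 2` gives `(k choose 2) d ≤ k d / α`, and `k (α b - d / α) > k α b / 2 ≥ b`.
  nlinarith [mul_le_mul_of_nonneg_left hk₂.le (mul_nonneg (by positivity : (0:ℝ) ≤ k) hd₀)]

end Agreement

theorem stmt18_general {F : Type*} [Field F] [DecidableEq F] (b d : ℕ) (hb : 0 < b)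
    (α : ℝ) (hα0 : 0 < α)
    (hαgt : Real.sqrt (2 * d / b) < α)
    (pts : Fin b → F × F) (hdist : Function.Injective pts) :
    let S : Set (Polynomial F) :=
      {g : Polynomial F | g.natDegree ≤ d ∧
        α * b ≤ ((Finset.univ.filter fun i : Fin b =>
                  Polynomial.eval (pts i).1 g = (pts i).2).card : ℝ)}
    S.Finite ∧ (S.ncard : ℝ) ≤ 2 / α := by
  intro S
  have hd : 2 * (d : ℝ) < α ^ 2 * Fintype.card (Fin b) := by
    rw [Fintype.card_fin, ← div_lt_iff₀ (by exact_mod_cast hb)]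
    exact (Real.sqrt_lt' hα0).1 hαgt
  obtain ⟨hfin, hcard⟩ := Set.finite_and_ncard_lt_of_forall_finset_card_ne fun T hTS =>
    card_ne_ceil_of_forall_agreement hdist hα0 hd T fun g hg => by
      rw [Fintype.card_fin]; exact hTS hg
  exact ⟨hfin, (Nat.lt_ceil.1 hcard).le⟩

/-- Fractional-agreement form of the Reed–Solomon list-size bound: given `b` distinct
pairs and `α > sqrt(2d/b)` with `0 < α ≤ 1`, at most `2/α` polynomials of degree at most
`d` agree with at least an `α` fraction of the pairs. -/
theorem stmt18 {F : Type*} [Field F] [DecidableEq F] (b d : ℕ) (hb : 0 < b)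
    (α : ℝ) (hα0 : 0 < α) (hα1 : α ≤ 1)
    (hαgt : Real.sqrt (2 * d / b) < α)
    (pts : Fin b → F × F) (hdist : Function.Injective pts) :
    let S : Set (Polynomial F) :=
      {g : Polynomial F | g.natDegree ≤ d ∧
        α * b ≤ ((Finset.univ.filter fun i : Fin b =>
                  Polynomial.eval (pts i).1 g = (pts i).2).card : ℝ)}
    S.Finite ∧ (S.ncard : ℝ) ≤ 2 / α :=
  stmt18_general b d hb α hα0 hαgt pts hdist
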